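/- arXiv:2602.06950 — 2 statements merged into one kernel-verified Lean document; each statement's English description precedes it below -/
import Mathlib

section
/- If T is a single-elimination tournament with at least 2 players and σ is a scoring system with distinct subset sums, then dim(T,σ) = max over matches x ∈ M(T) of (|P(x)| − max over in-neighbors u of x of |P(u)|). -/
namespace SETour

variable {V : Type*}

/-- `a` is a player, i.e. a source of the digraph. -/
def IsPlayer (adj : V → V → Prop) (a : V) : Prop := ∀ u, ¬ adj u a

/-- `x` is a match, i.e. a non-source vertex. -/
def IsMatch (adj : V → V → Prop) (x : V) : Prop := ¬ IsPlayer adj x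

/-- `z` is a sink, i.e. has no out-neighbors. -/
def IsSink (adj : V → V → Prop) (z : V) : Prop := ∀ w, ¬ adj z w

/-- A single-elimination tournament: exactly one sink, every non-sink vertex has
exactly one out-neighbor (at most one out-neighbor in general), no directed cycles,
and no vertex has exactly one in-neighbor. -/
structure IsSETournament (adj : V → V → Prop) : Prop where
  unique_sink : ∃! z, IsSink adj z
  out_unique : ∀ ⦃v w w'⦄, adj v w → adj v w' → w = w'
  acyclic : ∀ v, ¬ Relation.TransGen adj v v
  in_ne_one : ∀ v, {u | adj u v}.ncard ≠ 1

/-- The set of players of the tournament. -/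
def players (adj : V → V → Prop) : Set V := {a | IsPlayer adj a}

/-- The player set `P(u)`: all players having a directed walk to `u`. -/
def playerSet (adj : V → V → Prop) (u : V) : Set V :=
  {a | IsPlayer adj a ∧ Relation.ReflTransGen adj a u}

/-- A bracket: a function from vertices to players fixing players, in which the
winner of each match is the winner of one of the matches feeding into it. -/
structure IsBracket (adj : V → V → Prop) (B : V → V) : Prop where
  toPlayer : ∀ v, IsPlayer adj (B v)
  player_fix : ∀ a, IsPlayer adj a → B a = a
  match_pred : ∀ x, IsMatch adj x → ∃ u, adj u x ∧ B x = B u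

/-- A scoring system: positive reals on matches. -/
def IsScoring (adj : V → V → Prop) (σ : V → ℝ) : Prop :=
  ∀ x, IsMatch adj x → 0 < σ x

/-- The σ-score of two brackets: the sum of σ over the matches on which they agree. -/
noncomputable def score (adj : V → V → Prop) (σ : V → ℝ) (B B' : V → V) : ℝ :=
  ∑ᶠ x ∈ {x | IsMatch adj x ∧ B x = B' x}, σ x

/-- A set of brackets is σ-resolving if any two distinct brackets are
distinguished by their σ-score against some member of the set. -/
def IsResolving (adj : V → V → Prop) (σ : V → ℝ) (𝓑 : Set (V → V)) : Prop :=
  ∀ B B' : V → V, IsBracket adj B → IsBracket adj B' → B ≠ B' →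
    ∃ Bi ∈ 𝓑, score adj σ Bi B ≠ score adj σ Bi B'

/-- The metric dimension: minimum size of a σ-resolving set of brackets. -/
noncomputable def dimT (adj : V → V → Prop) (σ : V → ℝ) : ℕ :=
  sInf {n | ∃ 𝓑 : Set (V → V), (∀ B ∈ 𝓑, IsBracket adj B) ∧
    IsResolving adj σ 𝓑 ∧ 𝓑.ncard = n}

/-- The resolving number: minimum `r` such that every set of `r` distinct
brackets is σ-resolving. -/
noncomputable def resT (adj : V → V → Prop) (σ : V → ℝ) : ℕ :=
  sInf {r | ∀ 𝓑 : Set (V → V), (∀ B ∈ 𝓑, IsBracket adj B) → 𝓑.ncard = r →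
    IsResolving adj σ 𝓑}

/-- `x` is the match where players `a` and `b` face off: it has in-neighbors
`u_a, u_b` with `P(u_a) ∩ {a,b} = {a}` and `P(u_b) ∩ {a,b} = {b}`. -/
def IsPairMatch (adj : V → V → Prop) (a b x : V) : Prop :=
  ∃ ua ub, adj ua x ∧ adj ub x ∧
    playerSet adj ua ∩ {a, b} = {a} ∧ playerSet adj ub ∩ {a, b} = {b}

open Classical in
/-- The bracket obtained from `B` by making player `a` win every match it can. -/
noncomputable def favBracket (adj : V → V → Prop) (B : V → V) (a : V) : V → V :=
  fun u => if a ∈ playerSet adj u then a else B u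

/-- A scoring system has distinct subset sums if distinct sets of matches have
distinct total scores. -/
def DistinctSubsetSums (adj : V → V → Prop) (σ : V → ℝ) : Prop :=
  ∀ M M' : Set V, (∀ x ∈ M, IsMatch adj x) → (∀ x ∈ M', IsMatch adj x) →
    ∑ᶠ x ∈ M, σ x = ∑ᶠ x ∈ M', σ x → M = M'

/-- The quantity `max_{x ∈ M(T)} (|P(x)| − max_{u ∈ N⁻(x)} |P(u)|)`. -/
noncomputable def lbound (adj : V → V → Prop) : ℕ :=
  sSup {k | ∃ x, IsMatch adj x ∧
    k = (playerSet adj x).ncard - sSup {m | ∃ u, adj u x ∧ m = (playerSet adj u).ncard}}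

/-- The vertex set of the sub-tournament `T_u`: vertices `v` with `P(v) ⊆ P(u)`. -/
def subVert (adj : V → V → Prop) (u : V) : Set V :=
  {v | playerSet adj v ⊆ playerSet adj u}

/-- The adjacency relation of the sub-tournament `T_u`. -/
def subAdj (adj : V → V → Prop) (u : V) : subVert adj u → subVert adj u → Prop :=
  fun v w => adj v.1 w.1

/-- A standard single-elimination tournament: one obtained from a complete
(perfect) binary tree by orienting all edges towards its root.  Equivalently, a
single-elimination tournament in which every match has exactly two in-neighbors
and all players are at the same distance from the sink (witnessed by a depth
function decreasing by 1 along every edge and constant on players). -/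
def IsStandard (adj : V → V → Prop) : Prop :=
  IsSETournament adj ∧
  (∀ x, IsMatch adj x → {u | adj u x}.ncard = 2) ∧
  ∃ (d : V → ℕ) (r : ℕ), (∀ v w, adj v w → d v = d w + 1) ∧
    ∀ a, IsPlayer adj a → d a = r

section Aux
open Relation
variable {adj : V → V → Prop}

theorem aux_wf_down [Finite V] (hT : IsSETournament adj) : WellFounded adj := by
  have h2 : IsIrrefl V (TransGen adj) := ⟨hT.acyclic⟩
  exact Subrelation.wf (fun {a b} h => TransGen.single h)
    (Finite.wellFounded_of_trans_of_irrefl (TransGen adj))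

theorem aux_wf_up [Finite V] (hT : IsSETournament adj) :
    WellFounded (Function.swap adj) := by
  have h2 : IsIrrefl V (TransGen (Function.swap adj)) :=
    ⟨fun a h => hT.acyclic a (transGen_swap.mp h)⟩
  exact Subrelation.wf (fun {a b} h => TransGen.single h)
    (Finite.wellFounded_of_trans_of_irrefl (TransGen (Function.swap adj)))

theorem aux_linear (hT : IsSETournament adj) {a u v : V}
    (h1 : ReflTransGen adj a u) (h2 : ReflTransGen adj a v) :
    ReflTransGen adj u v ∨ ReflTransGen adj v u := by
  induction h1 with
  | refl => exact Or.inl h2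
  | tail h step ih =>
    rename_i b c
    rcases ih with h' | h'
    · rcases h'.cases_head with rfl | ⟨w, hw, hwv⟩
      · exact Or.inr (ReflTransGen.single step)
      · obtain rfl : w = c := hT.out_unique hw step
        exact Or.inl hwv
    · exact Or.inr (h'.tail step)

theorem aux_playerSet_eq {a : V} (ha : IsPlayer adj a) : playerSet adj a = {a} := by
  ext b
  constructor
  · rintro ⟨hb, hba⟩
    rcases hba.cases_tail with rfl | ⟨c, _, hc⟩
    · rfl
    · exact absurd hc (ha c)
  · rintro rfl
    exact ⟨ha, ReflTransGen.refl⟩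

theorem aux_playerSet_mono {u v : V} (h : ReflTransGen adj u v) :
    playerSet adj u ⊆ playerSet adj v := fun a ha => ⟨ha.1, ha.2.trans h⟩

theorem aux_playerSet_nonempty [Finite V] (hT : IsSETournament adj) (v : V) :
    ∃ a, a ∈ playerSet adj v := by
  induction v using WellFounded.induction (aux_wf_down hT) with
  | _ v ih =>
    by_cases hv : IsPlayer adj v
    · exact ⟨v, hv, ReflTransGen.refl⟩
    · simp only [IsPlayer, not_forall, not_not] at hv
      obtain ⟨u, hu⟩ := hv
      obtain ⟨a, ha, hau⟩ := ih u hu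
      exact ⟨a, ha, hau.tail hu⟩

theorem aux_mem_child {x : V} (hx : IsMatch adj x) {a : V} (ha : a ∈ playerSet adj x) :
    ∃ u, adj u x ∧ a ∈ playerSet adj u := by
  obtain ⟨hap, hax⟩ := ha
  rcases hax.cases_tail with rfl | ⟨u, hau, hux⟩
  · exact absurd hap hx
  · exact ⟨u, hux, hap, hau⟩

theorem aux_no_two (hT : IsSETournament adj) {u u' x : V}
    (hu : adj u x) (hu' : adj u' x) (hne : u ≠ u') (h : ReflTransGen adj u u') :
    False := by
  rcases h.cases_head with rfl | ⟨w, huw, hwu'⟩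
  · exact hne rfl
  · rw [hT.out_unique huw hu] at hwu'
    exact hT.acyclic x (TransGen.tail' hwu' hu')

theorem aux_child_disjoint (hT : IsSETournament adj) {u u' x : V}
    (hu : adj u x) (hu' : adj u' x) (hne : u ≠ u') {a : V}
    (ha : a ∈ playerSet adj u) (ha' : a ∈ playerSet adj u') : False := by
  rcases aux_linear hT ha.2 ha'.2 with h | h
  · exact aux_no_two hT hu hu' hne h
  · exact aux_no_two hT hu' hu hne.symm h

theorem aux_match_exists_in {x : V} (hx : IsMatch adj x) : ∃ u, adj u x := by
  unfold IsMatch IsPlayer at hx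
  push_neg at hx
  exact hx

end Aux
section
open Relation Set
variable {V : Type*} {adj : V → V → Prop}

open Classical in
noncomputable def ustar (adj : V → V → Prop) : V → V := fun x =>
  if h : ∃ u, adj u x ∧ ∀ u', adj u' x → (playerSet adj u').ncard ≤ (playerSet adj u).ncard
  then h.choose else x

theorem ustar_spec [Finite V] {x : V} (hx : IsMatch adj x) :
    adj (ustar adj x) x ∧
      ∀ u, adj u x → (playerSet adj u).ncard ≤ (playerSet adj (ustar adj x)).ncard := by
  classical
  have h : ∃ u, adj u x ∧ ∀ u', adj u' x →
      (playerSet adj u').ncard ≤ (playerSet adj u).ncard := by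
    obtain ⟨u0, hu0⟩ := aux_match_exists_in hx
    have hfin : {u | adj u x}.Finite := Set.toFinite _
    obtain ⟨b, hb, hbmax⟩ := Finset.exists_max_image hfin.toFinset
      (fun u => (playerSet adj u).ncard) ⟨u0, by simpa using hu0⟩
    refine ⟨b, by simpa using hb, fun u' hu' => hbmax u' (by simpa using hu')⟩
  rw [show ustar adj x = h.choose by simp [ustar, h]]
  exact h.choose_spec

theorem ustar_inner_sSup [Finite V] {x : V} (hx : IsMatch adj x) :
    sSup {m | ∃ u, adj u x ∧ m = (playerSet adj u).ncard} =
      (playerSet adj (ustar adj x)).ncard := by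
  obtain ⟨h1, h2⟩ := ustar_spec (adj := adj) hx
  apply le_antisymm
  · refine csSup_le ⟨_, ⟨_, h1, rfl⟩⟩ ?_
    rintro m ⟨u, hu, rfl⟩
    exact h2 u hu
  · apply le_csSup
    · refine ⟨(playerSet adj (ustar adj x)).ncard, ?_⟩
      rintro m ⟨u, hu, rfl⟩
      exact h2 u hu
    · exact ⟨_, h1, rfl⟩

theorem lbound_bddAbove [Finite V] :
    BddAbove {k | ∃ x, IsMatch adj x ∧
      k = (playerSet adj x).ncard - sSup {m | ∃ u, adj u x ∧ m = (playerSet adj u).ncard}} := by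
  refine ⟨Nat.card V, ?_⟩
  rintro k ⟨x, hx, rfl⟩
  calc (playerSet adj x).ncard - _ ≤ (playerSet adj x).ncard := Nat.sub_le _ _
  _ ≤ (Set.univ : Set V).ncard := Set.ncard_le_ncard (Set.subset_univ _) Set.finite_univ
  _ = Nat.card V := Set.ncard_univ V

theorem lbound_ge [Finite V] {x : V} (hx : IsMatch adj x) :
    (playerSet adj x).ncard - (playerSet adj (ustar adj x)).ncard ≤ lbound adj := by
  apply le_csSup lbound_bddAbove
  exact ⟨x, hx, by rw [ustar_inner_sSup hx]⟩

theorem reach_sink [Finite V] (hT : IsSETournament adj) {z : V} (hz : IsSink adj z)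
    (huniq : ∀ y, IsSink adj y → y = z) : ∀ v, ReflTransGen adj v z := by
  intro v
  induction v using WellFounded.induction (aux_wf_up hT) with
  | _ v ih =>
    by_cases hv : IsSink adj v
    · rw [huniq v hv]
    · simp only [IsSink, not_forall, not_not] at hv
      obtain ⟨w, hw⟩ := hv
      exact ReflTransGen.head hw (ih w hw)

theorem sink_match [Finite V] (hT : IsSETournament adj) (h2 : 2 ≤ (players adj).ncard) :
    ∃ z, IsMatch adj z ∧ IsSink adj z ∧ ∀ v, ReflTransGen adj v z := by
  obtain ⟨z, hz, huniq⟩ := hT.unique_sink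
  have hreach := reach_sink hT hz (fun y hy => huniq y hy)
  refine ⟨z, ?_, hz, hreach⟩
  intro hzp
  obtain ⟨p, hp, hpz⟩ := Set.exists_ne_of_one_lt_ncard h2 z
  rcases (hreach p).cases_tail with h | ⟨c, _, hc⟩
  · exact hpz h.symm
  · exact hzp c hc

end
section
open Relation Set
variable {V : Type*} {adj : V → V → Prop}

/-- predicate: `y` is a match on `w`'s path where `w` is outside the max child -/
def offQ (adj : V → V → Prop) (w y : V) : Prop :=
  IsMatch adj y ∧ w ∈ playerSet adj y ∧ w ∉ playerSet adj (ustar adj y)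

theorem aux_topmost [Finite V] (hT : IsSETournament adj) (Q : V → Prop) :
    ∀ y, Q y → ∃ m, ReflTransGen adj y m ∧ Q m ∧ ∀ y', TransGen adj m y' → ¬ Q y' := by
  intro y
  induction y using WellFounded.induction (aux_wf_up hT).transGen with
  | _ y ih =>
    intro hy
    by_cases h : ∃ y', TransGen adj y y' ∧ Q y'
    · obtain ⟨y', hyy', hQ⟩ := h
      obtain ⟨m, h1, h2, h3⟩ := ih y' (transGen_swap.mpr hyy') hQ
      exact ⟨m, (hyy'.to_reflTransGen).trans h1, h2, h3⟩
    · push_neg at h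
      exact ⟨y, ReflTransGen.refl, hy, h⟩

open Classical in
noncomputable def mfun [Finite V] (hT : IsSETournament adj) (w : V) : V :=
  if h : ∃ y, offQ adj w y
  then (aux_topmost hT (offQ adj w) h.choose h.choose_spec).choose else w

theorem mfun_spec [Finite V] (hT : IsSETournament adj) {w : V} (h : ∃ y, offQ adj w y) :
    offQ adj w (mfun hT w) ∧ ∀ y', TransGen adj (mfun hT w) y' → ¬ offQ adj w y' := by
  rw [show mfun hT w = (aux_topmost hT (offQ adj w) h.choose h.choose_spec).choose by
    simp [mfun, h]]
  obtain ⟨h1, h2, h3⟩ := (aux_topmost hT (offQ adj w) h.choose h.choose_spec).choose_spec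
  exact ⟨h2, h3⟩

/-- every witness lies (weakly) below the topmost witness -/
theorem mfun_ge [Finite V] (hT : IsSETournament adj) {w y : V} (hy : offQ adj w y) :
    ReflTransGen adj y (mfun hT w) := by
  obtain ⟨hQ, hmax⟩ := mfun_spec hT ⟨y, hy⟩
  rcases aux_linear hT hy.2.1.2 hQ.2.1.2 with h | h
  · exact h
  · rcases h.cases_head with rfl | ⟨c, hc, hcy⟩
    · exact ReflTransGen.refl
    · exact absurd hy (hmax y (TransGen.head' hc hcy))

theorem mfun_eq_on [Finite V] (hT : IsSETournament adj) {x a b : V}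
    (ha : a ∈ playerSet adj x) (hb : b ∈ playerSet adj x)
    (hya : ∃ y, ReflTransGen adj x y ∧ offQ adj a y)
    (hyb : ∃ y, ReflTransGen adj x y ∧ offQ adj b y) :
    mfun hT a = mfun hT b := by
  obtain ⟨ya, hxya, hQa⟩ := hya
  obtain ⟨yb, hxyb, hQb⟩ := hyb
  have hma : ReflTransGen adj x (mfun hT a) := hxya.trans (mfun_ge hT hQa)
  have hmb : ReflTransGen adj x (mfun hT b) := hxyb.trans (mfun_ge hT hQb)
  obtain ⟨hQma, hmaxa⟩ := mfun_spec hT ⟨ya, hQa⟩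
  obtain ⟨hQmb, hmaxb⟩ := mfun_spec hT ⟨yb, hQb⟩
  -- helper: strict comparability is impossible
  have key : ∀ (a b : V), a ∈ playerSet adj x → b ∈ playerSet adj x →
      offQ adj a (mfun hT a) → offQ adj b (mfun hT b) →
      (∀ y', TransGen adj (mfun hT a) y' → ¬ offQ adj a y') →
      ReflTransGen adj x (mfun hT a) → ReflTransGen adj x (mfun hT b) →
      TransGen adj (mfun hT a) (mfun hT b) → False := by
    intro a b ha hb hQma hQmb hmaxa hma hmb htg
    have haP : a ∈ playerSet adj (ustar adj (mfun hT b)) := by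
      by_contra hcon
      exact hmaxa _ htg ⟨hQmb.1, ⟨ha.1, ha.2.trans hmb⟩, hcon⟩
    have hbP : b ∉ playerSet adj (ustar adj (mfun hT b)) := hQmb.2.2
    have hadju : adj (ustar adj (mfun hT b)) (mfun hT b) := (ustar_spec hQmb.1).1
    rcases aux_linear hT ha.2 haP.2 with h | h
    · exact hbP ⟨hb.1, hb.2.trans h⟩
    · rcases h.cases_head with heq | ⟨c, hc, hcx⟩
      · exact hbP (by rw [heq]; exact hb)
      · rw [hT.out_unique hc hadju] at hcx
        exact hT.acyclic _ (htg.trans_left (hcx.trans hma))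
  rcases aux_linear hT hma hmb with h | h
  · rcases h.cases_head with heq | ⟨c, hc, hcx⟩
    · exact heq
    · exact absurd (TransGen.head' hc hcx) (fun htg => key a b ha hb hQma hQmb hmaxa hma hmb htg)
  · rcases h.cases_head with heq | ⟨c, hc, hcx⟩
    · exact heq.symm
    · exact absurd (TransGen.head' hc hcx) (fun htg => key b a hb ha hQmb hQma hmaxb hmb hma htg)

end
section
open Relation Set
variable {V : Type*} {adj : V → V → Prop}

theorem aux_inj_fun [Finite V] {s : Set V} {D : ℕ} (hs : s.ncard ≤ D) :
    ∃ g : V → ℕ, Set.InjOn g s ∧ ∀ v ∈ s, g v < D := by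
  classical
  have hfin : s.Finite := Set.toFinite _
  set t := hfin.toFinset with ht
  have hcard : t.card = s.ncard := (Set.ncard_eq_toFinset_card s hfin).symm
  let e := t.equivFin
  refine ⟨fun v => if h : v ∈ t then (e ⟨v, h⟩).val else 0, ?_, ?_⟩
  · intro v hv w hw hvw
    have hv' : v ∈ t := by simpa [ht] using hv
    have hw' : w ∈ t := by simpa [ht] using hw
    simp only [dif_pos hv', dif_pos hw'] at hvw
    have := e.injective (Fin.ext hvw)
    exact congrArg Subtype.val this
  · intro v hv
    have hv' : v ∈ t := by simpa [ht] using hv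
    simp only [dif_pos hv']
    exact lt_of_lt_of_le ((e ⟨v, hv'⟩).isLt.trans_le (le_of_eq hcard)) hs

theorem diff_ncard_le_lbound [Finite V] {y : V} (hy : IsMatch adj y) :
    (playerSet adj y \ playerSet adj (ustar adj y)).ncard ≤ lbound adj := by
  have hsub : playerSet adj (ustar adj y) ⊆ playerSet adj y :=
    aux_playerSet_mono (ReflTransGen.single (ustar_spec hy).1)
  rw [Set.ncard_diff hsub (Set.toFinite _)]
  exact lbound_ge hy

open Classical in
noncomputable def injAt (adj : V → V → Prop) [Finite V] : V → V → ℕ := fun y =>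
  if h : (playerSet adj y \ playerSet adj (ustar adj y)).ncard ≤ lbound adj
  then (aux_inj_fun h).choose else fun _ => 0

theorem injAt_spec [Finite V] {y : V} (hy : IsMatch adj y) :
    Set.InjOn (injAt adj y) (playerSet adj y \ playerSet adj (ustar adj y)) ∧
      ∀ v ∈ playerSet adj y \ playerSet adj (ustar adj y), injAt adj y v < lbound adj := by
  have h := diff_ncard_le_lbound hy
  rw [show injAt adj y = (aux_inj_fun h).choose by simp [injAt, h]]
  exact (aux_inj_fun h).choose_spec

noncomputable def colorFn [Finite V] (hT : IsSETournament adj) : V → ℕ := fun w =>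
  injAt adj (mfun hT w) w

theorem colorFn_lt [Finite V] (hT : IsSETournament adj) {w y : V} (hy : offQ adj w y) :
    colorFn hT w < lbound adj := by
  obtain ⟨hQ, _⟩ := mfun_spec hT ⟨y, hy⟩
  exact (injAt_spec hQ.1).2 w ⟨hQ.2.1, hQ.2.2⟩

theorem colorFn_inj [Finite V] (hT : IsSETournament adj) {x a b : V}
    (ha : a ∈ playerSet adj x) (hb : b ∈ playerSet adj x)
    (hya : ∃ y, ReflTransGen adj x y ∧ offQ adj a y)
    (hyb : ∃ y, ReflTransGen adj x y ∧ offQ adj b y)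
    (hc : colorFn hT a = colorFn hT b) : a = b := by
  have hm : mfun hT a = mfun hT b := mfun_eq_on hT ha hb hya hyb
  obtain ⟨ya, _, hQa⟩ := hya
  obtain ⟨yb, _, hQb⟩ := hyb
  obtain ⟨hQma, _⟩ := mfun_spec hT ⟨ya, hQa⟩
  obtain ⟨hQmb, _⟩ := mfun_spec hT ⟨yb, hQb⟩
  have hA := (injAt_spec (adj := adj) hQma.1).1
  refine hA ⟨hQma.2.1, hQma.2.2⟩ ?_ ?_
  · rw [hm]; exact ⟨hQmb.2.1, hQmb.2.2⟩
  · unfold colorFn at hc; rw [hm] at hc ⊢; exact hc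
end
section
open Relation Set
variable {V : Type*} {adj : V → V → Prop}

open Classical in
noncomputable def brkt [Finite V] (hT : IsSETournament adj) (c : V → ℕ) (i : ℕ) : V → V :=
  (aux_wf_down hT).fix fun v ih =>
    if hp : IsPlayer adj v then v
    else if hw : ∃ w, w ∈ playerSet adj v ∧ w ∉ playerSet adj (ustar adj v) ∧ c w = i
      then hw.choose
      else ih (ustar adj v) (ustar_spec hp).1

open Classical in
theorem brkt_eq [Finite V] (hT : IsSETournament adj) (c : V → ℕ) (i : ℕ) (v : V) :
    brkt hT c i v =
      if IsPlayer adj v then v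
      else if hw : ∃ w, w ∈ playerSet adj v ∧ w ∉ playerSet adj (ustar adj v) ∧ c w = i
        then hw.choose else brkt hT c i (ustar adj v) :=
  WellFounded.fix_eq _ _ _

theorem brkt_mem [Finite V] (hT : IsSETournament adj) (c : V → ℕ) (i : ℕ) (v : V) :
    brkt hT c i v ∈ playerSet adj v := by
  classical
  induction v using WellFounded.induction (aux_wf_down hT) with
  | _ v ih =>
    rw [brkt_eq]
    by_cases hp : IsPlayer adj v
    · rw [if_pos hp]; exact ⟨hp, ReflTransGen.refl⟩
    · rw [if_neg hp]
      by_cases hw : ∃ w, w ∈ playerSet adj v ∧ w ∉ playerSet adj (ustar adj v) ∧ c w = i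
      · rw [dif_pos hw]; exact hw.choose_spec.1
      · rw [dif_neg hw]
        have hadj : adj (ustar adj v) v := (ustar_spec hp).1
        exact aux_playerSet_mono (ReflTransGen.single hadj) (ih _ hadj)

theorem brkt_F [Finite V] (hT : IsSETournament adj) (c : V → ℕ) (i : ℕ)
    (HC : ∀ v w w', (w ∈ playerSet adj v ∧ ∃ y, ReflTransGen adj v y ∧ offQ adj w y) →
      (w' ∈ playerSet adj v ∧ ∃ y, ReflTransGen adj v y ∧ offQ adj w' y) →
      c w = i → c w' = i → w = w') :
    ∀ v w, w ∈ playerSet adj v → c w = i →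
      (∃ y, ReflTransGen adj v y ∧ offQ adj w y) → brkt hT c i v = w := by
  classical
  intro v
  induction v using WellFounded.induction (aux_wf_down hT) with
  | _ v ih =>
    intro w hwP hci hwit
    rw [brkt_eq]
    by_cases hp : IsPlayer adj v
    · rw [if_pos hp]
      have := aux_playerSet_eq (adj := adj) hp ▸ hwP
      simpa using this.symm
    · rw [if_neg hp]
      by_cases hw : ∃ w', w' ∈ playerSet adj v ∧ w' ∉ playerSet adj (ustar adj v) ∧ c w' = i
      · rw [dif_pos hw]
        obtain ⟨h1, h2, h3⟩ := hw.choose_spec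
        exact (HC v w hw.choose ⟨hwP, hwit⟩
          ⟨h1, v, ReflTransGen.refl, hp, h1, h2⟩ hci h3).symm
      · rw [dif_neg hw]
        have hadj : adj (ustar adj v) v := (ustar_spec hp).1
        have hwu : w ∈ playerSet adj (ustar adj v) := by
          by_contra hcon
          exact hw ⟨w, hwP, hcon, hci⟩
        obtain ⟨y, hvy, hQ⟩ := hwit
        exact ih _ hadj w hwu hci ⟨y, ReflTransGen.head hadj hvy, hQ⟩

theorem brkt_isBracket [Finite V] (hT : IsSETournament adj) (c : V → ℕ) (i : ℕ)
    (HC : ∀ v w w', (w ∈ playerSet adj v ∧ ∃ y, ReflTransGen adj v y ∧ offQ adj w y) →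
      (w' ∈ playerSet adj v ∧ ∃ y, ReflTransGen adj v y ∧ offQ adj w' y) →
      c w = i → c w' = i → w = w') :
    IsBracket adj (brkt hT c i) := by
  classical
  refine ⟨fun v => (brkt_mem hT c i v).1, fun a ha => by rw [brkt_eq, if_pos ha], ?_⟩
  intro x hx
  rw [brkt_eq, if_neg hx]
  by_cases hw : ∃ w, w ∈ playerSet adj x ∧ w ∉ playerSet adj (ustar adj x) ∧ c w = i
  · rw [dif_pos hw]
    obtain ⟨h1, h2, h3⟩ := hw.choose_spec
    obtain ⟨u, hu, hmem⟩ := aux_mem_child hx h1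
    refine ⟨u, hu, (brkt_F hT c i HC u _ hmem h3 ?_).symm⟩
    exact ⟨x, ReflTransGen.single hu, hx, h1, h2⟩
  · rw [dif_neg hw]
    exact ⟨ustar adj x, (ustar_spec hx).1, rfl⟩

end

section Main6
open Relation Set
variable {V : Type*} {adj : V → V → Prop}

theorem bracket_mem [Finite V] (hT : IsSETournament adj) {B : V → V}
    (hB : IsBracket adj B) : ∀ v, B v ∈ playerSet adj v := by
  intro v
  induction v using WellFounded.induction (aux_wf_down hT) with
  | _ v ih =>
    by_cases hp : IsPlayer adj v
    · rw [hB.player_fix v hp]; exact ⟨hp, ReflTransGen.refl⟩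
    · obtain ⟨u, hu, heq⟩ := hB.match_pred v hp
      rw [heq]
      exact aux_playerSet_mono (ReflTransGen.single hu) (ih u hu)

theorem fav_isBracket [Finite V] (hT : IsSETournament adj) {B : V → V} {a : V}
    (hB : IsBracket adj B) (ha : IsPlayer adj a) :
    IsBracket adj (favBracket adj B a) := by
  classical
  constructor
  · intro v
    unfold favBracket
    split
    · exact ha
    · exact hB.toPlayer v
  · intro p hp
    unfold favBracket
    split
    · rename_i h
      have := aux_playerSet_eq (adj := adj) hp ▸ h
      simpa using this
    · exact hB.player_fix p hp
  · intro x hx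
    by_cases hax : a ∈ playerSet adj x
    · obtain ⟨u, hu, hmem⟩ := aux_mem_child hx hax
      refine ⟨u, hu, ?_⟩
      unfold favBracket
      rw [if_pos hax, if_pos hmem]
    · obtain ⟨u, hu, heq⟩ := hB.match_pred x hx
      have hnu : a ∉ playerSet adj u :=
        fun h => hax (aux_playerSet_mono (ReflTransGen.single hu) h)
      refine ⟨u, hu, ?_⟩
      unfold favBracket
      rw [if_neg hax, if_neg hnu]
      exact heq

theorem fav_val [Finite V] {B : V → V} {a v : V} (h : a ∈ playerSet adj v) :
    favBracket adj B a v = a := by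
  unfold favBracket; rw [if_pos h]

open Classical in
noncomputable def pairB (adj : V → V → Prop) (D0 : V → V) (a b x₀ : V) : V → V := fun v =>
  if a ∈ playerSet adj v ∧ ReflTransGen adj v x₀ then a
  else if b ∈ playerSet adj v ∧ ReflTransGen adj v x₀ then b else D0 v

theorem aux_common (hT : IsSETournament adj) {x₀ c₁ c₂ a b v : V}
    (h1 : adj c₁ x₀) (h2 : adj c₂ x₀) (hne : c₁ ≠ c₂)
    (ha : a ∈ playerSet adj c₁) (hb : b ∈ playerSet adj c₂)
    (hav : a ∈ playerSet adj v) (hbv : b ∈ playerSet adj v)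
    (hvx : ReflTransGen adj v x₀) : v = x₀ := by
  rcases aux_linear hT hav.2 ha.2 with h | h
  · exact absurd hb (fun hb' => aux_child_disjoint hT h1 h2 hne ⟨hbv.1, hbv.2.trans h⟩ hb')
  · rcases h.cases_head with heq | ⟨w, hw, hwv⟩
    · exact absurd hb (fun hb' =>
        aux_child_disjoint hT h1 h2 hne (by rw [heq]; exact hbv) hb')
    · rw [hT.out_unique hw h1] at hwv
      by_contra hnev
      rcases hvx.cases_head with heq2 | ⟨w2, hw2, hw2x⟩
      · exact hnev heq2
      · exact hT.acyclic v ((TransGen.head' hw2 hw2x).trans_left hwv)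

theorem pairB_val [Finite V] {D0 : V → V} {a b x₀ : V} (ha : a ∈ playerSet adj x₀) :
    pairB adj D0 a b x₀ x₀ = a := by
  unfold pairB
  rw [if_pos ⟨ha, ReflTransGen.refl⟩]

theorem pairB_agree [Finite V] (hT : IsSETournament adj) {D0 : V → V} {x₀ c₁ c₂ a b : V}
    (h1 : adj c₁ x₀) (h2 : adj c₂ x₀) (hne : c₁ ≠ c₂)
    (ha : a ∈ playerSet adj c₁) (hb : b ∈ playerSet adj c₂) :
    ∀ v, v ≠ x₀ → pairB adj D0 a b x₀ v = pairB adj D0 b a x₀ v := by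
  intro v hv
  unfold pairB
  by_cases hA : a ∈ playerSet adj v ∧ ReflTransGen adj v x₀
  · by_cases hB : b ∈ playerSet adj v ∧ ReflTransGen adj v x₀
    · exact absurd (aux_common hT h1 h2 hne ha hb hA.1 hB.1 hA.2) hv
    · rw [if_pos hA, if_neg hB, if_pos hA]
  · by_cases hB : b ∈ playerSet adj v ∧ ReflTransGen adj v x₀
    · rw [if_neg hA, if_pos hB, if_pos hB]
    · rw [if_neg hA, if_neg hB, if_neg hB, if_neg hA]

theorem pairB_isBracket [Finite V] (hT : IsSETournament adj) {D0 : V → V} {x₀ c₁ c₂ a b : V}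
    (h1 : adj c₁ x₀) (h2 : adj c₂ x₀) (hne : c₁ ≠ c₂)
    (ha : a ∈ playerSet adj c₁) (hb : b ∈ playerSet adj c₂)
    (hD0 : IsBracket adj D0)
    (hpar : ∀ y, adj x₀ y → ∃ c', adj c' y ∧ a ∉ playerSet adj c' ∧ b ∉ playerSet adj c' ∧
      D0 c' = D0 y) :
    IsBracket adj (pairB adj D0 a b x₀) := by
  classical
  constructor
  · intro v
    unfold pairB
    split
    · exact ha.1
    · split
      · exact hb.1
      · exact hD0.toPlayer v
  · intro p hp
    unfold pairB
    split
    · rename_i h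
      have := aux_playerSet_eq (adj := adj) hp ▸ h.1
      simpa using this
    · split
      · rename_i h
        have := aux_playerSet_eq (adj := adj) hp ▸ h.1
        simpa using this
      · exact hD0.player_fix p hp
  · intro x hx
    by_cases hA : a ∈ playerSet adj x ∧ ReflTransGen adj x x₀
    · obtain ⟨u, hu, hmem⟩ := aux_mem_child hx hA.1
      have hAu : a ∈ playerSet adj u ∧ ReflTransGen adj u x₀ :=
        ⟨hmem, ReflTransGen.head hu hA.2⟩
      refine ⟨u, hu, ?_⟩
      unfold pairB
      rw [if_pos hA, if_pos hAu]
    · by_cases hB : b ∈ playerSet adj x ∧ ReflTransGen adj x x₀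
      · obtain ⟨u, hu, hmem⟩ := aux_mem_child hx hB.1
        have hBu : b ∈ playerSet adj u ∧ ReflTransGen adj u x₀ :=
          ⟨hmem, ReflTransGen.head hu hB.2⟩
        have hAu : ¬(a ∈ playerSet adj u ∧ ReflTransGen adj u x₀) := fun hcon =>
          hA ⟨aux_playerSet_mono (ReflTransGen.single hu) hcon.1, hB.2⟩
        refine ⟨u, hu, ?_⟩
        unfold pairB
        rw [if_neg hA, if_pos hB, if_neg hAu, if_pos hBu]
      · obtain ⟨u0, hu0, hD⟩ := hD0.match_pred x hx
        by_cases hcrit : u0 = x₀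
        · obtain ⟨c', hc', hac', hbc', hDc'⟩ := hpar x (hcrit ▸ hu0)
          have hAc' : ¬(a ∈ playerSet adj c' ∧ ReflTransGen adj c' x₀) := fun h => hac' h.1
          have hBc' : ¬(b ∈ playerSet adj c' ∧ ReflTransGen adj c' x₀) := fun h => hbc' h.1
          refine ⟨c', hc', ?_⟩
          unfold pairB
          rw [if_neg hA, if_neg hB, if_neg hAc', if_neg hBc', hDc']
        · have hAu : ¬(a ∈ playerSet adj u0 ∧ ReflTransGen adj u0 x₀) := by
            rintro ⟨haa, hr⟩
            rcases hr.cases_head with heq | ⟨w, hw, hwx⟩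
            · exact hcrit heq
            · rw [hT.out_unique hw hu0] at hwx
              exact hA ⟨aux_playerSet_mono (ReflTransGen.single hu0) haa, hwx⟩
          have hBu : ¬(b ∈ playerSet adj u0 ∧ ReflTransGen adj u0 x₀) := by
            rintro ⟨hbb, hr⟩
            rcases hr.cases_head with heq | ⟨w, hw, hwx⟩
            · exact hcrit heq
            · rw [hT.out_unique hw hu0] at hwx
              exact hB ⟨aux_playerSet_mono (ReflTransGen.single hu0) hbb, hwx⟩
          refine ⟨u0, hu0, ?_⟩
          unfold pairB
          rw [if_neg hA, if_neg hB, if_neg hAu, if_neg hBu, hD]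

end Main6

section Main7
open Relation Set
variable {V : Type*} {adj : V → V → Prop}

theorem aux_other_child [Finite V] (hT : IsSETournament adj) {p u0 : V} (hu0 : adj u0 p) :
    ∃ u', adj u' p ∧ u' ≠ u0 := by
  by_contra h
  push_neg at h
  apply hT.in_ne_one p
  have : {u | adj u p} = {u0} :=
    Set.eq_singleton_iff_unique_mem.mpr ⟨hu0, fun u hu => h u hu⟩
  rw [this, Set.ncard_singleton]

theorem pair_exists [Finite V] (hT : IsSETournament adj) {x₀ c₁ c₂ a b : V}
    (h1 : adj c₁ x₀) (h2 : adj c₂ x₀) (hne : c₁ ≠ c₂)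
    (ha : a ∈ playerSet adj c₁) (hb : b ∈ playerSet adj c₂) :
    ∃ B B', IsBracket adj B ∧ IsBracket adj B' ∧ B x₀ = a ∧ B' x₀ = b ∧
      (∀ v, v ≠ x₀ → B v = B' v) := by
  classical
  have hbex : IsBracket adj (brkt hT (fun _ => 0) 1) :=
    brkt_isBracket hT _ 1 (by intro v w w' _ _ h _; simp at h)
  set bex := brkt hT (fun _ => 0) 1 with hbexdef
  have haP : a ∈ playerSet adj x₀ := aux_playerSet_mono (ReflTransGen.single h1) ha
  have hbP : b ∈ playerSet adj x₀ := aux_playerSet_mono (ReflTransGen.single h2) hb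
  -- choose the base bracket D0 together with the parent property
  have hD0ex : ∃ D0 : V → V, IsBracket adj D0 ∧
      ∀ y, adj x₀ y → ∃ c', adj c' y ∧ a ∉ playerSet adj c' ∧ b ∉ playerSet adj c' ∧
        D0 c' = D0 y := by
    by_cases hp : ∃ p, adj x₀ p
    · obtain ⟨p, hpadj⟩ := hp
      obtain ⟨c', hc', hc'ne⟩ := aux_other_child hT hpadj
      obtain ⟨t, htP⟩ := aux_playerSet_nonempty hT c'
      refine ⟨favBracket adj bex t, fav_isBracket hT hbex htP.1, ?_⟩
      intro y hy
      have hyp : y = p := hT.out_unique hy hpadj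
      subst hyp
      have htPy : t ∈ playerSet adj y := aux_playerSet_mono (ReflTransGen.single hc') htP
      refine ⟨c', hc', ?_, ?_, ?_⟩
      · exact fun hcon => aux_child_disjoint hT hc' hy hc'ne hcon haP
      · exact fun hcon => aux_child_disjoint hT hc' hy hc'ne hcon hbP
      · rw [fav_val htP, fav_val htPy]
    · exact ⟨bex, hbex, fun y hy => absurd ⟨y, hy⟩ hp⟩
  obtain ⟨D0, hD0, hpar⟩ := hD0ex
  have hpar' : ∀ y, adj x₀ y → ∃ c', adj c' y ∧ b ∉ playerSet adj c' ∧ a ∉ playerSet adj c' ∧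
      D0 c' = D0 y := by
    intro y hy
    obtain ⟨c', h1', h2', h3', h4'⟩ := hpar y hy
    exact ⟨c', h1', h3', h2', h4'⟩
  refine ⟨pairB adj D0 a b x₀, pairB adj D0 b a x₀,
    pairB_isBracket hT h1 h2 hne ha hb hD0 hpar,
    pairB_isBracket hT h2 h1 hne.symm hb ha hD0 hpar',
    pairB_val haP, pairB_val hbP, pairB_agree hT h1 h2 hne ha hb⟩

theorem upper [Finite V] (hT : IsSETournament adj) (σ : V → ℝ)
    (hd : DistinctSubsetSums adj σ) :
    ∃ 𝓑 : Set (V → V), (∀ B ∈ 𝓑, IsBracket adj B) ∧ IsResolving adj σ 𝓑 ∧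
      𝓑.ncard ≤ lbound adj := by
  classical
  set D := lbound adj with hD
  set c := colorFn hT with hc
  have HC : ∀ i : ℕ, ∀ v w w',
      (w ∈ playerSet adj v ∧ ∃ y, ReflTransGen adj v y ∧ offQ adj w y) →
      (w' ∈ playerSet adj v ∧ ∃ y, ReflTransGen adj v y ∧ offQ adj w' y) →
      c w = i → c w' = i → w = w' := by
    intro i v w w' hw hw' hci hci'
    exact colorFn_inj hT hw.1 hw'.1 hw.2 hw'.2 (hci.trans hci'.symm)
  refine ⟨(fun i => brkt hT c i) '' (Set.Iio D), ?_, ?_, ?_⟩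
  · rintro B ⟨i, hi, rfl⟩
    exact brkt_isBracket hT c i (HC i)
  · intro B B' hB hB' hne
    by_contra hcon
    push_neg at hcon
    apply hne
    funext v
    induction v using WellFounded.induction (aux_wf_down hT) with
    | _ v ih =>
      by_cases hp : IsPlayer adj v
      · rw [hB.player_fix v hp, hB'.player_fix v hp]
      · have hsets : ∀ i < D,
            {y | IsMatch adj y ∧ brkt hT c i y = B y} =
              {y | IsMatch adj y ∧ brkt hT c i y = B' y} := by
          intro i hi
          apply hd _ _ (fun x hx => hx.1) (fun x hx => hx.1)
          exact hcon _ ⟨i, hi, rfl⟩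
        have hBv := bracket_mem hT hB v
        have hB'v := bracket_mem hT hB' v
        by_cases hio : B v ∈ playerSet adj (ustar adj v)
        · by_cases hio' : B' v ∈ playerSet adj (ustar adj v)
          · obtain ⟨u, hu, hequ⟩ := hB.match_pred v hp
            obtain ⟨u', hu', hequ'⟩ := hB'.match_pred v hp
            have husym : u = ustar adj v := by
              by_contra hneu
              exact aux_child_disjoint hT hu (ustar_spec hp).1 hneu
                (by rw [hequ]; exact bracket_mem hT hB u) hio
            have husym' : u' = ustar adj v := by
              by_contra hneu
              exact aux_child_disjoint hT hu' (ustar_spec hp).1 hneu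
                (by rw [hequ']; exact bracket_mem hT hB' u') hio'
            rw [hequ, hequ', husym, husym', ih (ustar adj v) (ustar_spec hp).1]
          · have hwit : offQ adj (B' v) v := ⟨hp, hB'v, hio'⟩
            have hiD : c (B' v) < D := colorFn_lt hT hwit
            have hkey : brkt hT c (c (B' v)) v = B' v :=
              brkt_F hT c _ (HC _) v (B' v) hB'v rfl ⟨v, ReflTransGen.refl, hwit⟩
            have hv1 : v ∈ {y | IsMatch adj y ∧ brkt hT c (c (B' v)) y = B' y} := ⟨hp, hkey⟩
            rw [← hsets _ hiD] at hv1
            rw [← hv1.2, hkey]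
        · have hwit : offQ adj (B v) v := ⟨hp, hBv, hio⟩
          have hiD : c (B v) < D := colorFn_lt hT hwit
          have hkey : brkt hT c (c (B v)) v = B v :=
            brkt_F hT c _ (HC _) v (B v) hBv rfl ⟨v, ReflTransGen.refl, hwit⟩
          have hv1 : v ∈ {y | IsMatch adj y ∧ brkt hT c (c (B v)) y = B y} := ⟨hp, hkey⟩
          rw [hsets _ hiD] at hv1
          rw [← hv1.2, hkey]
  · calc ((fun i => brkt hT c i) '' (Set.Iio D)).ncard
        ≤ (Set.Iio D).ncard := Set.ncard_image_le (Set.toFinite _)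
    _ = D := by
        rw [show (Set.Iio D) = ↑(Finset.range D) by ext; simp, Set.ncard_coe_finset,
          Finset.card_range]

theorem lower [Finite V] (hT : IsSETournament adj) (h2 : 2 ≤ (players adj).ncard)
    (σ : V → ℝ) :
    ∀ 𝓑 : Set (V → V), (∀ B ∈ 𝓑, IsBracket adj B) → IsResolving adj σ 𝓑 →
      lbound adj ≤ 𝓑.ncard := by
  intro 𝓑 hBr hres
  by_contra hlt
  push_neg at hlt
  obtain ⟨z, hzm, _, _⟩ := sink_match hT h2
  have hKne : {k | ∃ x, IsMatch adj x ∧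
      k = (playerSet adj x).ncard -
        sSup {m | ∃ u, adj u x ∧ m = (playerSet adj u).ncard}}.Nonempty := ⟨_, z, hzm, rfl⟩
  obtain ⟨x₀, hx₀, hx₀eq⟩ := Nat.sSup_mem hKne lbound_bddAbove
  rw [ustar_inner_sSup hx₀] at hx₀eq
  have hDeq : lbound adj =
      (playerSet adj x₀).ncard - (playerSet adj (ustar adj x₀)).ncard := hx₀eq
  set F := (fun B : V → V => B x₀) '' 𝓑 with hF
  have hFcard : F.ncard < lbound adj :=
    lt_of_le_of_lt (Set.ncard_image_le (Set.toFinite _)) hlt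
  have key : ∃ c₁ c₂ a b, adj c₁ x₀ ∧ adj c₂ x₀ ∧ c₁ ≠ c₂ ∧
      a ∈ playerSet adj c₁ ∧ b ∈ playerSet adj c₂ ∧ a ∉ F ∧ b ∉ F := by
    set S := {u | adj u x₀ ∧ ((playerSet adj u) \ F).Nonempty} with hS
    by_cases hSS : ∃ u ∈ S, ∃ u' ∈ S, u ≠ u'
    · obtain ⟨u, ⟨hu, aa, haa⟩, u', ⟨hu', bb, hbb⟩, hneu⟩ := hSS
      exact ⟨u, u', aa, bb, hu, hu', hneu, haa.1, hbb.1, haa.2, hbb.2⟩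
    · push_neg at hSS
      exfalso
      by_cases hS0 : S.Nonempty
      · obtain ⟨c₁, hc₁S⟩ := hS0
        have hsub : playerSet adj x₀ \ playerSet adj c₁ ⊆ F := by
          rintro p ⟨hpP, hpnot⟩
          obtain ⟨u, hu, hmem⟩ := aux_mem_child hx₀ hpP
          by_contra hpF
          have huS : u ∈ S := ⟨hu, p, hmem, hpF⟩
          exact hpnot ((hSS u huS c₁ hc₁S) ▸ hmem)
        have hsub' : playerSet adj c₁ ⊆ playerSet adj x₀ :=
          aux_playerSet_mono (ReflTransGen.single hc₁S.1)
        have hge : lbound adj ≤ F.ncard := by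
          calc lbound adj
              = (playerSet adj x₀).ncard - (playerSet adj (ustar adj x₀)).ncard := hDeq
            _ ≤ (playerSet adj x₀).ncard - (playerSet adj c₁).ncard :=
                Nat.sub_le_sub_left ((ustar_spec hx₀).2 c₁ hc₁S.1) _
            _ = (playerSet adj x₀ \ playerSet adj c₁).ncard :=
                (Set.ncard_diff hsub' (Set.toFinite _)).symm
            _ ≤ F.ncard := Set.ncard_le_ncard hsub (Set.toFinite _)
        exact absurd hFcard (not_lt.mpr hge)
      · have hsub : playerSet adj x₀ ⊆ F := by
          intro p hpP
          obtain ⟨u, hu, hmem⟩ := aux_mem_child hx₀ hpP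
          by_contra hpF
          exact hS0 ⟨u, hu, p, hmem, hpF⟩
        have hge : lbound adj ≤ F.ncard := by
          calc lbound adj
              = (playerSet adj x₀).ncard - (playerSet adj (ustar adj x₀)).ncard := hDeq
            _ ≤ (playerSet adj x₀).ncard := Nat.sub_le _ _
            _ ≤ F.ncard := Set.ncard_le_ncard hsub (Set.toFinite _)
        exact absurd hFcard (not_lt.mpr hge)
  obtain ⟨c₁, c₂, a, b, h1, h2', hnec, ha, hb, haF, hbF⟩ := key
  obtain ⟨B, B', hB, hB', hBx, hB'x, hagree⟩ := pair_exists hT h1 h2' hnec ha hb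
  have hBne : B ≠ B' := by
    intro h
    have hab : a = b := by rw [← hBx, h, hB'x]
    refine aux_child_disjoint hT h1 h2' hnec ha ?_
    rw [hab]; exact hb
  obtain ⟨Bi, hBi, hsne⟩ := hres B B' hB hB' hBne
  apply hsne
  have hset : {x | IsMatch adj x ∧ Bi x = B x} = {x | IsMatch adj x ∧ Bi x = B' x} := by
    ext y
    simp only [Set.mem_setOf_eq]
    by_cases hy : y = x₀
    · subst hy
      have hBiF : Bi y ∈ F := ⟨Bi, hBi, rfl⟩
      constructor
      · rintro ⟨hm, he⟩
        exact absurd (by rw [← hBx, ← he]; exact hBiF) haF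
      · rintro ⟨hm, he⟩
        exact absurd (by rw [← hB'x, ← he]; exact hBiF) hbF
    · rw [hagree y hy]
  unfold score
  rw [hset]

end Main7

/-- If σ has distinct subset sums, then
`dim(T,σ) = max_{x ∈ M(T)} (|P(x)| − max_{u ∈ N⁻(x)} |P(u)|)`. -/
theorem statement_3 {V : Type*} [Finite V] (adj : V → V → Prop)
    (hT : IsSETournament adj) (h2 : 2 ≤ (players adj).ncard)
    (σ : V → ℝ) (hσ : IsScoring adj σ) (hd : DistinctSubsetSums adj σ) :
    dimT adj σ = lbound adj := by
  obtain ⟨𝓑₀, hb0, hr0, hc0⟩ := upper hT σ hd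
  have hmem : 𝓑₀.ncard ∈ {n | ∃ 𝓑 : Set (V → V), (∀ B ∈ 𝓑, IsBracket adj B) ∧
      IsResolving adj σ 𝓑 ∧ 𝓑.ncard = n} := ⟨𝓑₀, hb0, hr0, rfl⟩
  apply le_antisymm
  · exact le_trans (Nat.sInf_le hmem) hc0
  · exact le_csInf ⟨_, hmem⟩
      (by rintro n ⟨𝓑, hbb, hrr, rfl⟩; exact lower hT h2 σ 𝓑 hbb hrr)

end SETour
end

section
/- Let T be a single-elimination tournament with at least 2 players and a total of N brackets. Define q_pair = (min over pairs of distinct players a, b of the number of brackets B with B(x_{a,b}) ∈ {a,b})/N. Then for every scoring system σ, res(T,σ) > (1 − q_pair)·N. -/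
namespace SETour

variable {V : Type*}

lemma wf_adj [Finite V] {adj : V → V → Prop} (hT : IsSETournament adj) :
    WellFounded adj := by
  haveI : IsIrrefl V (Relation.TransGen adj) := ⟨hT.acyclic⟩
  exact Subrelation.wf (fun h => Relation.TransGen.single h)
    (Finite.wellFounded_of_trans_of_irrefl _)

lemma lin {adj : V → V → Prop} (hT : IsSETournament adj) :
    ∀ {p u v : V}, Relation.ReflTransGen adj p u → Relation.ReflTransGen adj p v →
      Relation.ReflTransGen adj u v ∨ Relation.ReflTransGen adj v u := by
  intro p u v hpu
  induction hpu using Relation.ReflTransGen.head_induction_on with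
  | refl => exact fun h => Or.inl h
  | head hpc hcu ih =>
    intro hpv
    rcases Relation.ReflTransGen.cases_head hpv with rfl | ⟨d, hpd, hdv⟩
    · exact Or.inr (Relation.ReflTransGen.head hpc hcu)
    · obtain rfl := hT.out_unique hpc hpd
      exact ih hdv

lemma winner_mem [Finite V] {adj : V → V → Prop} (hT : IsSETournament adj)
    {B : V → V} (hB : IsBracket adj B) (v : V) : B v ∈ playerSet adj v := by
  refine (wf_adj hT).induction (C := fun v => B v ∈ playerSet adj v) v (fun v ih => ?_)
  show B v ∈ playerSet adj v
  by_cases h : IsPlayer adj v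
  · rw [hB.player_fix v h]; exact ⟨h, Relation.ReflTransGen.refl⟩
  · obtain ⟨u, huv, hBu⟩ := hB.match_pred v h
    obtain ⟨hp, hw⟩ := ih u huv
    rw [hBu]
    exact ⟨hp, hw.tail huv⟩

lemma winner_back [Finite V] {adj : V → V → Prop} (hT : IsSETournament adj)
    {B : V → V} (hB : IsBracket adj B) {p x v : V}
    (hxv : Relation.ReflTransGen adj x v) (hpx : p ∈ playerSet adj x)
    (hBv : B v = p) : B x = p := by
  revert hBv
  induction hxv with
  | refl => exact id
  | @tail w v hxw hwv ih =>
    intro hBv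
    have hvmatch : IsMatch adj v := fun hp => hp w hwv
    obtain ⟨u, huv, hBu⟩ := hB.match_pred v hvmatch
    have hup : B u = p := by rw [← hBu, hBv]
    have hpu : Relation.ReflTransGen adj p u := by
      have h := winner_mem hT hB u
      rw [hup] at h
      exact h.2
    have hpw : Relation.ReflTransGen adj p w := hpx.2.trans hxw
    have huw : u = w := by
      rcases lin hT hpu hpw with h | h
      · rcases Relation.ReflTransGen.cases_head h with rfl | ⟨c, huc, hcw⟩
        · rfl
        · obtain rfl := hT.out_unique huv huc
          exact absurd (Relation.TransGen.tail' hcw hwv) (hT.acyclic v)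
      · rcases Relation.ReflTransGen.cases_head h with rfl | ⟨c, hwc, hcu⟩
        · rfl
        · obtain rfl := hT.out_unique hwv hwc
          exact absurd (Relation.TransGen.tail' hcu huv) (hT.acyclic v)
    exact ih (huw ▸ hup)

lemma playerSet_player {adj : V → V → Prop} {a c : V} (hc : IsPlayer adj c)
    (h : a ∈ playerSet adj c) : a = c := by
  rcases Relation.ReflTransGen.cases_tail h.2 with h1 | ⟨w, _, hwc⟩
  · exact h1.symm
  · exact absurd hwc (hc w)

lemma favBracket_isBracket {adj : V → V → Prop} {B : V → V} {a : V}
    (hB : IsBracket adj B) (ha : IsPlayer adj a) :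
    IsBracket adj (favBracket adj B a) := by
  refine ⟨?_, ?_, ?_⟩
  · intro v
    by_cases h : a ∈ playerSet adj v
    · simpa [favBracket, h] using ha
    · simpa [favBracket, h] using hB.toPlayer v
  · intro c hc
    by_cases h : a ∈ playerSet adj c
    · obtain rfl := playerSet_player hc h
      simp [favBracket, h]
    · simp [favBracket, h, hB.player_fix c hc]
  · intro v hv
    by_cases h : a ∈ playerSet adj v
    · have hne : a ≠ v := fun he => hv (he ▸ ha)
      rcases Relation.ReflTransGen.cases_tail h.2 with h1 | ⟨w, haw, hwv⟩
      · exact absurd h1.symm hne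
      · have haw' : a ∈ playerSet adj w := ⟨ha, haw⟩
        exact ⟨w, hwv, by simp [favBracket, h, haw']⟩
    · obtain ⟨u, huv, hBu⟩ := hB.match_pred v hv
      have hnu : a ∉ playerSet adj u := fun hu => h ⟨hu.1, hu.2.tail huv⟩
      exact ⟨u, huv, by simp [favBracket, h, hnu, hBu]⟩

lemma exists_bracket [Finite V] {adj : V → V → Prop} (hT : IsSETournament adj) :
    ∃ B, IsBracket adj B := by
  classical
  have wf := wf_adj hT
  have hex : ∀ v, ¬ IsPlayer adj v → ∃ u, adj u v := by
    intro v hv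
    by_contra h
    push_neg at h
    exact hv h
  set F : ∀ v : V, (∀ u, adj u v → V) → V :=
    fun v IH => if h : IsPlayer adj v then v else IH (hex v h).choose (hex v h).choose_spec
    with hF
  set B : V → V := wf.fix F with hBdef
  have hfix : ∀ v, B v = F v (fun u _ => B u) := fun v => wf.fix_eq F v
  have hplayer : ∀ v, IsPlayer adj v → B v = v := by
    intro v hv
    rw [hfix v, hF]
    exact dif_pos hv
  have hmatch : ∀ v, ¬ IsPlayer adj v → ∃ u, adj u v ∧ B v = B u := by
    intro v hv
    refine ⟨(hex v hv).choose, (hex v hv).choose_spec, ?_⟩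
    rw [hfix v, hF]
    exact dif_neg hv
  refine ⟨B, ⟨?_, hplayer, fun v hv => hmatch v hv⟩⟩
  intro v
  refine wf.induction (C := fun v => IsPlayer adj (B v)) v (fun v ih => ?_)
  show IsPlayer adj (B v)
  by_cases h : IsPlayer adj v
  · rw [hplayer v h]; exact h
  · obtain ⟨u, huv, he⟩ := hmatch v h
    rw [he]
    exact ih u huv

/-- With `N` the total number of brackets and
`q_pair = (min over distinct players a,b of #{B : B(x_{a,b}) ∈ {a,b}})/N`,
for every scoring system σ we have `res(T,σ) > (1 − q_pair) N`. -/
theorem statement_5 {V : Type*} [Finite V] (adj : V → V → Prop)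
    (hT : IsSETournament adj) (h2 : 2 ≤ (players adj).ncard)
    (N : ℕ) (hN : N = {B : V → V | IsBracket adj B}.ncard)
    (qpair : ℝ)
    (hq : IsLeast {q : ℝ | ∃ a b x : V, IsPlayer adj a ∧ IsPlayer adj b ∧ a ≠ b ∧
      IsMatch adj x ∧ IsPairMatch adj a b x ∧
      q = ({B : V → V | IsBracket adj B ∧ (B x = a ∨ B x = b)}.ncard : ℝ) / N} qpair)
    (σ : V → ℝ) (hσ : IsScoring adj σ) :
    (1 - qpair) * N < (resT adj σ : ℝ) := by
  classical
  obtain ⟨a, b, x, ha, hb, hab, hxm, hpm, hqeq⟩ := hq.1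
  obtain ⟨ua, ub, hua, hub, hPa, hPb⟩ := hpm
  have haua : a ∈ playerSet adj ua := by
    have h : a ∈ playerSet adj ua ∩ {a, b} := by rw [hPa]; exact rfl
    exact h.1
  have hbub : b ∈ playerSet adj ub := by
    have h : b ∈ playerSet adj ub ∩ {a, b} := by rw [hPb]; exact rfl
    exact h.1
  have hbnua : b ∉ playerSet adj ua := by
    intro h
    have h2' : b ∈ playerSet adj ua ∩ {a, b} := ⟨h, by simp⟩
    rw [hPa] at h2'
    have hba : b = a := by simpa using h2'
    exact hab hba.symm
  have hax : a ∈ playerSet adj x := ⟨ha, haua.2.tail hua⟩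
  have hbx : b ∈ playerSet adj x := ⟨hb, hbub.2.tail hub⟩
  have hreach : ∀ v, a ∈ playerSet adj v → b ∈ playerSet adj v →
      Relation.ReflTransGen adj x v := by
    intro v hav hbv
    rcases lin hT hav.2 haua.2 with hvua | huav
    · exact absurd (⟨hb, hbv.2.trans hvua⟩ : b ∈ playerSet adj ua) hbnua
    · rcases Relation.ReflTransGen.cases_head huav with h1 | ⟨c, huac, hcv⟩
      · exact absurd (⟨hb, h1 ▸ hbv.2⟩ : b ∈ playerSet adj ua) hbnua
      · obtain rfl := hT.out_unique hua huac
        exact hcv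
  obtain ⟨C0, hC0⟩ := exists_bracket hT
  set B0 : V → V := favBracket adj (favBracket adj C0 b) a with hB0
  set B1 : V → V := favBracket adj (favBracket adj C0 a) b with hB1
  have hB0b : IsBracket adj B0 := favBracket_isBracket (favBracket_isBracket hC0 hb) ha
  have hB1b : IsBracket adj B1 := favBracket_isBracket (favBracket_isBracket hC0 ha) hb
  have hdiff : ∀ v, B0 v = B1 v ∨
      (a ∈ playerSet adj v ∧ b ∈ playerSet adj v ∧ B0 v = a ∧ B1 v = b) := by
    intro v
    by_cases hA : a ∈ playerSet adj v <;> by_cases hB : b ∈ playerSet adj v <;>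
      simp [hB0, hB1, favBracket, hA, hB]
  have hB0x : B0 x = a := by simp [hB0, favBracket, hax]
  have hB1x : B1 x = b := by simp [hB1, favBracket, hbx]
  have hne : B0 ≠ B1 := fun h => hab (by rw [← hB0x, h, hB1x])
  have hscore : ∀ Bi : V → V, IsBracket adj Bi → ¬(Bi x = a ∨ Bi x = b) →
      score adj σ Bi B0 = score adj σ Bi B1 := by
    intro Bi hBi hBix
    have hsets : {y | IsMatch adj y ∧ Bi y = B0 y} = {y | IsMatch adj y ∧ Bi y = B1 y} := by
      ext y
      simp only [Set.mem_setOf_eq]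
      refine and_congr_right fun hy => ?_
      rcases hdiff y with h | ⟨hay, hby, h0, h1⟩
      · rw [h]
      · rw [h0, h1]
        constructor
        · intro hBa
          exact absurd (Or.inl (winner_back hT hBi (hreach y hay hby) hax hBa)) hBix
        · intro hBb
          exact absurd (Or.inr (winner_back hT hBi (hreach y hay hby) hbx hBb)) hBix
    unfold score
    rw [hsets]
  haveI : Finite (V → V) := Pi.finite
  set Br := {B : V → V | IsBracket adj B} with hBr
  set S := {B : V → V | IsBracket adj B ∧ (B x = a ∨ B x = b)} with hS
  have hBrfin : Br.Finite := Set.toFinite _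
  have hSsub : S ⊆ Br := fun B hB => hB.1
  have hsN : S.ncard ≤ N := hN ▸ Set.ncard_le_ncard hSsub hBrfin
  have hNpos : 0 < N := by
    rw [hN]
    exact (Set.ncard_pos hBrfin).mpr ⟨C0, hC0⟩
  set C := Br \ S with hC
  have hCcard : C.ncard = N - S.ncard := by
    rw [hC, Set.ncard_diff hSsub, hN]
  have hmain : ∀ r ∈ {r : ℕ | ∀ 𝓑 : Set (V → V), (∀ B ∈ 𝓑, IsBracket adj B) →
      𝓑.ncard = r → IsResolving adj σ 𝓑}, N - S.ncard < r := by
    intro r hr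
    by_contra hle
    push_neg at hle
    have hrC : r ≤ C.ncard := hCcard ▸ hle
    obtain ⟨𝓑, h𝓑sub, h𝓑card⟩ := Set.exists_subset_card_eq hrC
    have hres := hr 𝓑 (fun B hB => (h𝓑sub hB).1) h𝓑card
    obtain ⟨Bi, hBiB, hBine⟩ := hres B0 B1 hB0b hB1b hne
    have hBiC := h𝓑sub hBiB
    exact hBine (hscore Bi hBiC.1 (fun h => hBiC.2 ⟨hBiC.1, h⟩))
  have hNmem : (N + 1) ∈ {r : ℕ | ∀ 𝓑 : Set (V → V), (∀ B ∈ 𝓑, IsBracket adj B) →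
      𝓑.ncard = r → IsResolving adj σ 𝓑} := by
    intro 𝓑 h𝓑 hcard
    exfalso
    have hle : 𝓑.ncard ≤ N := hN ▸ Set.ncard_le_ncard (fun B hB => h𝓑 B hB) hBrfin
    omega
  have hres_ge : N - S.ncard + 1 ≤ resT adj σ := by
    unfold resT
    exact le_csInf ⟨N + 1, hNmem⟩ (fun r hr => by have := hmain r hr; omega)
  have hltn : N - S.ncard < resT adj σ := by omega
  have hN0 : (N : ℝ) ≠ 0 := Nat.cast_ne_zero.mpr hNpos.ne'
  calc (1 - qpair) * N = ((N - S.ncard : ℕ) : ℝ) := by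
        rw [hqeq, Nat.cast_sub hsN]
        field_simp
    _ < (resT adj σ : ℝ) := by exact_mod_cast hltn


end SETour
end
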